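/- For n ≥ 4, there exists a family of n−2 pairwise vertex-disjoint edges (K_2-structures) of Q_n and two vertices x, y of Q_n avoiding these edges, such that every path from x to y in Q_n avoiding all the removed edges' endpoints has length at least n+1. -/

import Mathlib

open SimpleGraph

/-- The `n`-dimensional hypercube: vertices are `Fin n → Bool`,
adjacent iff Hamming distance is `1`. -/
def Q (n : ℕ) : SimpleGraph (Fin n → Bool) where
  Adj u v := hammingDist u v = 1
  symm := ⟨fun u v h => by simpa [hammingDist_comm] using h⟩
  loopless := ⟨fun u h => by simp [hammingDist_self] at h⟩

/-- Flip the `i`-th bit of `x`. -/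
def flipBit {n : ℕ} (x : Fin n → Bool) (i : Fin n) : Fin n → Bool :=
  Function.update x i (!x i)

/-- `S` is a subcube of dimension exactly `m` (fixing `n - m` coordinates). -/
def IsSubcube {n : ℕ} (m : ℕ) (S : Set (Fin n → Bool)) : Prop :=
  ∃ A : Finset (Fin n), A.card = n - m ∧ ∃ p : Fin n → Bool,
    S = {x | ∀ i ∈ A, x i = p i}

/-- `S` is a subcube of dimension at most `m` (fixing at least `n - m` coordinates). -/
def IsSubcubeLe {n : ℕ} (m : ℕ) (S : Set (Fin n → Bool)) : Prop :=
  ∃ A : Finset (Fin n), n - m ≤ A.card ∧ ∃ p : Fin n → Bool,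
    S = {x | ∀ i ∈ A, x i = p i}

/-!
Take `x = 0`, let `y` be the all-ones vertex with bit `l` cleared, and remove the edges
`{e_i, e_i + e_a}` for `i ∉ {a, l}`. In the cube every `u`–`v` walk has length
`d(u, v) + 2k`, so it suffices to rule out an `x`–`y` geodesic, of length `n - 1`. A geodesic only
flips bits in which its current vertex differs from `y`: its first vertex is `e_j` with `j ≠ l`,
which is removed unless `j = a`, and then its second vertex is `e_a + e_m` with `m ∉ {a, l}`,
which is removed.
-/

open Finset

section

variable {n : ℕ}

@[simp]
lemma flipBit_apply_self (u : Fin n → Bool) (j : Fin n) : flipBit u j j = !u j := by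
  simp [flipBit]

lemma flipBit_apply_of_ne (u : Fin n → Bool) {j k : Fin n} (h : k ≠ j) :
    flipBit u j k = u k :=
  Function.update_of_ne h _ _

@[simp]
lemma flipBit_flipBit (u : Fin n → Bool) (j : Fin n) : flipBit (flipBit u j) j = u := by
  funext k
  by_cases hk : k = j
  · subst hk; simp
  · simp only [flipBit_apply_of_ne _ hk]

lemma hammingDist_flipBit_of_eq {u v : Fin n → Bool} {j : Fin n} (h : u j = v j) :
    hammingDist (flipBit u j) v = hammingDist u v + 1 := by
  have hsupp : univ.filter (fun k => flipBit u j k ≠ v k) =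
      insert j (univ.filter fun k => u k ≠ v k) := by
    ext k
    by_cases hk : k = j
    · subst hk; simp [h]
    · simp [flipBit_apply_of_ne _ hk, hk]
  unfold hammingDist
  rw [hsupp, card_insert_of_notMem (by simp [h])]

lemma hammingDist_flipBit_of_ne {u v : Fin n → Bool} {j : Fin n} (h : u j ≠ v j) :
    hammingDist (flipBit u j) v + 1 = hammingDist u v := by
  have hflip : flipBit u j j = v j := by
    revert h; rw [flipBit_apply_self]; cases u j <;> cases v j <;> simp
  simpa using (hammingDist_flipBit_of_eq hflip).symm

lemma Q.adj_flipBit (u : Fin n → Bool) (j : Fin n) : (Q n).Adj u (flipBit u j) := by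
  show hammingDist u (flipBit u j) = 1
  rw [hammingDist_comm, hammingDist_flipBit_of_eq rfl, hammingDist_self]

lemma Q.exists_eq_flipBit_of_adj {u w : Fin n → Bool} (h : (Q n).Adj u w) :
    ∃ j, w = flipBit u j := by
  have huw : hammingDist u w = 1 := h
  obtain ⟨j, hj⟩ := Function.ne_iff.mp (hammingDist_ne_zero.mp (by omega : hammingDist u w ≠ 0))
  have hflip := hammingDist_flipBit_of_ne hj
  exact ⟨j, (hammingDist_eq_zero.mp (by omega)).symm⟩

/-- Every step changes the Hamming distance to the target by exactly one. -/
lemma Q.exists_length_eq_hammingDist_add_two_mul {u v : Fin n → Bool} (p : (Q n).Walk u v) :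
    ∃ k, p.length = hammingDist u v + 2 * k := by
  induction p with
  | nil => exact ⟨0, by simp⟩
  | @cons u _ v h q ih =>
    obtain ⟨k, hk⟩ := ih
    obtain ⟨j, rfl⟩ := Q.exists_eq_flipBit_of_adj h
    by_cases huv : u j = v j
    · have := hammingDist_flipBit_of_eq huv
      exact ⟨k + 1, by simp only [Walk.length_cons]; omega⟩
    · have := hammingDist_flipBit_of_ne huv
      exact ⟨k, by simp only [Walk.length_cons]; omega⟩

lemma Q.exists_flipBit_of_length_cons_eq_hammingDist {u w v : Fin n → Bool}
    (h : (Q n).Adj u w) (q : (Q n).Walk w v) (hq : (q.cons h).length = hammingDist u v) :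
    ∃ j, u j ≠ v j ∧ w = flipBit u j ∧ q.length = hammingDist w v := by
  obtain ⟨j, rfl⟩ := Q.exists_eq_flipBit_of_adj h
  obtain ⟨k, hk⟩ := Q.exists_length_eq_hammingDist_add_two_mul q
  rw [Walk.length_cons] at hq
  by_cases huv : u j = v j
  · have := hammingDist_flipBit_of_eq huv
    omega
  · have := hammingDist_flipBit_of_ne huv
    exact ⟨j, huv, rfl, by omega⟩

def boolIndicator (s : Finset (Fin n)) : Fin n → Bool := fun k => decide (k ∈ s)

lemma boolIndicator_injective : Function.Injective (boolIndicator (n := n)) := by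
  intro s t h
  ext k
  simpa [boolIndicator] using congrFun h k

lemma hammingDist_boolIndicator (s t : Finset (Fin n)) :
    hammingDist (boolIndicator s) (boolIndicator t) = #(symmDiff s t) := by
  unfold hammingDist
  congr 1
  ext k
  by_cases hs : k ∈ s <;> by_cases ht : k ∈ t <;> simp [boolIndicator, mem_symmDiff, hs, ht]

lemma flipBit_boolIndicator {s : Finset (Fin n)} {j : Fin n} (hj : j ∉ s) :
    flipBit (boolIndicator s) j = boolIndicator (insert j s) := by
  funext k
  by_cases hk : k = j
  · subst hk; simp [boolIndicator, hj]
  · simp [flipBit_apply_of_ne _ hk, boolIndicator, hk]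

/-- The edge `{x^i, z^i}` of the paper for `x = 0` and `z = e_a`, where `boolIndicator s` is the
vertex with support `s`. -/
def faultyEdge (a i : Fin n) : Set (Fin n → Bool) :=
  {boolIndicator {i}, boolIndicator {a, i}}

open Classical in
noncomputable def faultyEdges (a l : Fin n) : Finset (Set (Fin n → Bool)) :=
  (univ \ {a, l}).image (faultyEdge a)

lemma mem_faultyEdges {a l : Fin n} {S : Set (Fin n → Bool)} :
    S ∈ faultyEdges a l ↔ ∃ i, i ≠ a ∧ i ≠ l ∧ faultyEdge a i = S := by
  simp [faultyEdges, and_assoc]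

lemma faultyEdge_injective (a : Fin n) : Function.Injective (faultyEdge a) := by
  intro i j h
  have hi : boolIndicator {i} ∈ faultyEdge a j := h ▸ Or.inl rfl
  rcases hi with hi | hi <;> have := boolIndicator_injective hi
  · simpa using this
  · have hj : j ∈ ({i} : Finset (Fin n)) := this ▸ mem_insert_of_mem (mem_singleton_self j)
    exact (mem_singleton.mp hj).symm

lemma card_faultyEdges {a l : Fin n} (hal : a ≠ l) : #(faultyEdges a l) = n - 2 := by
  rw [faultyEdges, card_image_of_injective _ (faultyEdge_injective a),
    card_sdiff_of_subset (subset_univ _), card_univ, Fintype.card_fin, card_pair hal]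

lemma Q.adj_boolIndicator_singleton_pair {a i : Fin n} (hia : i ≠ a) :
    (Q n).Adj (boolIndicator {i}) (boolIndicator {a, i}) := by
  rw [← flipBit_boolIndicator (by simpa using hia.symm)]
  exact Q.adj_flipBit _ _

lemma disjoint_faultyEdge {a i j : Fin n} (hia : i ≠ a) (hij : i ≠ j) :
    Disjoint (faultyEdge a i) (faultyEdge a j) := by
  rw [Set.disjoint_left]
  rintro w (rfl | rfl) (h | h) <;> have := boolIndicator_injective h
  · exact hij (singleton_inj.mp this)
  · have hj : j ∈ ({i} : Finset (Fin n)) := this ▸ mem_insert_of_mem (mem_singleton_self j)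
    exact hij (mem_singleton.mp hj).symm
  · have hi : i ∈ ({j} : Finset (Fin n)) := this ▸ mem_insert_of_mem (mem_singleton_self i)
    exact hij (mem_singleton.mp hi)
  · have hi : i ∈ ({a, j} : Finset (Fin n)) := this ▸ mem_insert_of_mem (mem_singleton_self i)
    simp [hia, hij] at hi

lemma faultyEdge_subset_sUnion_faultyEdges {a l i : Fin n} (hia : i ≠ a) (hil : i ≠ l) :
    faultyEdge a i ⊆ ⋃₀ ↑(faultyEdges a l) :=
  Set.subset_sUnion_of_mem (mem_faultyEdges.mpr ⟨i, hia, hil, rfl⟩)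

lemma boolIndicator_notMem_sUnion_faultyEdges {a l : Fin n} {s : Finset (Fin n)}
    (hs : #s = 0 ∨ 2 < #s) : boolIndicator s ∉ ⋃₀ ↑(faultyEdges a l) := by
  rintro ⟨_, hS, hsS⟩
  obtain ⟨i, -, -, rfl⟩ := mem_faultyEdges.mp hS
  rcases hsS with h | h <;> rw [boolIndicator_injective h] at hs
  · simp at hs
  · have := card_pair_eq_one_or_two (a := a) (b := i)
    omega

lemma length_ne_hammingDist_of_avoids_faultyEdges {a l : Fin n} (hal : a ≠ l) (hn : 3 ≤ n)
    (p : (Q n).Walk (boolIndicator ∅) (boolIndicator (univ.erase l)))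
    (hp : ∀ w ∈ p.support, w ∉ ⋃₀ ↑(faultyEdges a l)) :
    p.length ≠ hammingDist (boolIndicator ∅) (boolIndicator (univ.erase l)) := by
  intro hlen
  have hcard : #(univ.erase l) = n - 1 := by simp
  have hxy : boolIndicator ∅ ≠ boolIndicator (univ.erase l) := fun h => by
    rw [← boolIndicator_injective h, card_empty] at hcard
    omega
  obtain ⟨_, h, q, rfl⟩ := Walk.exists_eq_cons_of_ne hxy p
  obtain ⟨j, hjy, hw, hq⟩ := Q.exists_flipBit_of_length_cons_eq_hammingDist h q hlen
  rw [flipBit_boolIndicator (notMem_empty j), insert_empty] at hw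
  subst hw
  have hjl : j ≠ l := by simpa [boolIndicator] using hjy
  by_cases hja : j ≠ a
  · exact hp _ (List.mem_cons_of_mem _ q.start_mem_support)
      (faultyEdge_subset_sUnion_faultyEdges hja hjl (Or.inl rfl))
  push Not at hja
  subst hja
  have hwy : boolIndicator {j} ≠ boolIndicator (univ.erase l) := fun h => by
    rw [← boolIndicator_injective h, card_singleton] at hcard
    omega
  obtain ⟨_, h', q', rfl⟩ := Walk.exists_eq_cons_of_ne hwy q
  obtain ⟨m, hmy, hw', -⟩ := Q.exists_flipBit_of_length_cons_eq_hammingDist h' q' hq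
  have hmj : m ≠ j := by rintro rfl; simp [boolIndicator, hjl] at hmy
  have hml : m ≠ l := by rintro rfl; simp [boolIndicator, hjl.symm] at hmy
  rw [flipBit_boolIndicator (by simpa using hmj), pair_comm] at hw'
  subst hw'
  exact hp _ (List.mem_cons_of_mem _ (List.mem_cons_of_mem _ q'.start_mem_support))
    (faultyEdge_subset_sUnion_faultyEdges hmj hml (Or.inr rfl))

end

theorem K2_structure_lower_bound (n : ℕ) (hn : 4 ≤ n) :
    ∃ F : Finset (Set (Fin n → Bool)), F.card = n - 2 ∧
      (∀ S ∈ F, ∃ a b : Fin n → Bool, (Q n).Adj a b ∧ S = {a, b}) ∧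
      (∀ S ∈ F, ∀ T ∈ F, S ≠ T → Disjoint S T) ∧
      ∃ x y : Fin n → Bool,
        x ∉ ⋃₀ (↑F : Set (Set (Fin n → Bool))) ∧
        y ∉ ⋃₀ (↑F : Set (Set (Fin n → Bool))) ∧
        ∀ p : (Q n).Walk x y, p.IsPath →
          (∀ w ∈ p.support, w ∉ ⋃₀ (↑F : Set (Set (Fin n → Bool)))) →
          n + 1 ≤ p.length := by
  let a : Fin n := ⟨0, by omega⟩
  let l : Fin n := ⟨1, by omega⟩
  have hal : a ≠ l := Fin.ne_of_val_ne zero_ne_one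
  refine ⟨faultyEdges a l, card_faultyEdges hal, ?_, ?_, boolIndicator ∅,
    boolIndicator (univ.erase l), boolIndicator_notMem_sUnion_faultyEdges (by simp),
    boolIndicator_notMem_sUnion_faultyEdges (by simp; omega), ?_⟩
  · simp only [mem_faultyEdges]
    rintro _ ⟨i, hia, -, rfl⟩
    exact ⟨_, _, Q.adj_boolIndicator_singleton_pair hia, rfl⟩
  · simp only [mem_faultyEdges]
    rintro _ ⟨i, hia, -, rfl⟩ _ ⟨j, -, -, rfl⟩ hij
    exact disjoint_faultyEdge hia (ne_of_apply_ne _ hij)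
  · intro p _ hp
    obtain ⟨k, hk⟩ := Q.exists_length_eq_hammingDist_add_two_mul p
    have hk0 : k ≠ 0 := by
      rintro rfl
      exact length_ne_hammingDist_of_avoids_faultyEdges hal (by omega) p hp hk
    have hdist : hammingDist (boolIndicator ∅) (boolIndicator (univ.erase l)) = n - 1 := by
      rw [hammingDist_boolIndicator, ← bot_eq_empty, bot_symmDiff]
      simp
    omega
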